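/- For every k > 0 (with f, v, B, η fixed), the map k ↦ V_B(f, k) is twice differentiable at k with second derivative (B/(k·v))·φ(d_2(f, k)); equivalently, the map k ↦ −η·B·Φ(η·d_2(f, k)) has derivative (B/(k·v))·φ(d_2(f, k)) at k. -/

import Mathlib

/-- Standard normal density `φ`. -/
noncomputable def nPDF (x : ℝ) : ℝ := (Real.sqrt (2 * Real.pi))⁻¹ * Real.exp (-(x ^ 2) / 2)

/-- Standard normal cumulative distribution function `Φ`. -/
noncomputable def nCDF (x : ℝ) : ℝ := ∫ t in Set.Iic x, nPDF t

/-- `d_1(f, k) = ln(f/k)/v + v/2`. -/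
noncomputable def dOne (v f k : ℝ) : ℝ := Real.log (f / k) / v + v / 2

/-- `d_2(f, k) = d_1(f, k) − v`. -/
noncomputable def dTwo (v f k : ℝ) : ℝ := dOne v f k - v

/-- Black formula `V_B(f, k) = η·B·(f·Φ(η·d_1(f,k)) − k·Φ(η·d_2(f,k)))`. -/
noncomputable def blackFormula (v B η f k : ℝ) : ℝ :=
  η * B * (f * nCDF (η * dOne v f k) - k * nCDF (η * dTwo v f k))


/-!
Differentiating the Black formula in `k`, the two terms coming from `Φ'(η d₁) ∂ₖd₁` and
`Φ'(η d₂) ∂ₖd₂` cancel because of the identity `f φ(d₁) = k φ(d₂)` (both `∂ₖd₁` and `∂ₖd₂`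
equal `-1/(k v)`). Hence `∂ₖV_B = -η B Φ(η d₂)` near `k`, and one more application of the
chain rule, with `φ` even and `η² = 1`, gives the second derivative.
-/

open Real MeasureTheory

lemma hasDerivAt_integral_Iic {g : ℝ → ℝ} (hg : Integrable g) (hg_cont : Continuous g)
    (x : ℝ) : HasDerivAt (fun y => ∫ t in Set.Iic y, g t) (g x) x := by
  have hsplit :
      ∀ y, ∫ t in Set.Iic y, g t = (∫ t in Set.Iic 0, g t) + ∫ t in (0 : ℝ)..y, g t := fun y => by
    linarith [intervalIntegral.integral_Iic_sub_Iic (hg.integrableOn (s := Set.Iic 0))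
      (hg.integrableOn (s := Set.Iic y))]
  rw [funext hsplit]
  exact (intervalIntegral.integral_hasDerivAt_right hg.intervalIntegrable
    (hg_cont.stronglyMeasurableAtFilter _ _) hg_cont.continuousAt).const_add _

lemma nPDF_eq_gaussianPDFReal : nPDF = ProbabilityTheory.gaussianPDFReal 0 1 := by
  ext x
  simp [nPDF, ProbabilityTheory.gaussianPDFReal]

lemma continuous_nPDF : Continuous nPDF := by
  unfold nPDF
  fun_prop

lemma hasDerivAt_nCDF (x : ℝ) : HasDerivAt nCDF (nPDF x) x := by
  have hint : Integrable nPDF :=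
    nPDF_eq_gaussianPDFReal ▸ ProbabilityTheory.integrable_gaussianPDFReal 0 1
  exact hasDerivAt_integral_Iic hint continuous_nPDF x

lemma nPDF_mul_of_sq_eq_one {η : ℝ} (hη : η ^ 2 = 1) (x : ℝ) : nPDF (η * x) = nPDF x := by
  simp only [nPDF, mul_pow, hη, one_mul]

lemma hasDerivAt_dOne {v f k : ℝ} (hf : f ≠ 0) (hk : k ≠ 0) :
    HasDerivAt (dOne v f) (-1 / (k * v)) k := by
  have hlog : HasDerivAt (fun x => (log f - log x) / v + v / 2) (-1 / (k * v)) k := by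
    refine ((((hasDerivAt_log hk).const_sub (log f)).div_const v).add_const (v / 2)).congr_deriv ?_
    ring
  refine hlog.congr_of_eventuallyEq ?_
  filter_upwards [isOpen_ne.mem_nhds hk] with x hx
  rw [dOne, log_div hf hx]

lemma hasDerivAt_dTwo {v f k : ℝ} (hf : f ≠ 0) (hk : k ≠ 0) :
    HasDerivAt (dTwo v f) (-1 / (k * v)) k :=
  (hasDerivAt_dOne hf hk).sub_const v

/-- Since `d₁² - d₂² = 2 log (f / k)`, this is `exp (-d₁²/2) = (k / f) exp (-d₂²/2)`. -/
lemma mul_nPDF_dOne {v f k : ℝ} (hf : 0 < f) (hk : 0 < k) (hv : v ≠ 0) :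
    f * nPDF (dOne v f k) = k * nPDF (dTwo v f k) := by
  have hexp : -dOne v f k ^ 2 / 2 = -dTwo v f k ^ 2 / 2 + log (k / f) := by
    rw [← neg_neg (log (k / f)), ← log_inv, inv_div, dTwo, dOne]
    field_simp
    ring
  rw [nPDF, nPDF, hexp, exp_add, exp_log (div_pos hk hf)]
  field_simp

lemma hasDerivAt_nCDF_comp {g : ℝ → ℝ} {g' k : ℝ} (η : ℝ) (hg : HasDerivAt g g' k) :
    HasDerivAt (fun x => nCDF (η * g x)) (nPDF (η * g k) * (η * g')) k :=
  (hasDerivAt_nCDF _).comp k (hg.const_mul η)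

lemma hasDerivAt_blackFormula {f k v : ℝ} (B : ℝ) {η : ℝ} (hf : 0 < f) (hk : 0 < k)
    (hv : v ≠ 0) (hη : η ^ 2 = 1) :
    HasDerivAt (blackFormula v B η f) (-η * B * nCDF (η * dTwo v f k)) k := by
  have hd₁ := hasDerivAt_nCDF_comp η (hasDerivAt_dOne (v := v) hf.ne' hk.ne')
  have hd₂ := (hasDerivAt_id' k).mul
    (hasDerivAt_nCDF_comp η (hasDerivAt_dTwo (v := v) hf.ne' hk.ne'))
  refine (((hd₁.const_mul f).sub hd₂).const_mul (η * B)).congr_deriv ?_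
  rw [nPDF_mul_of_sq_eq_one hη, nPDF_mul_of_sq_eq_one hη]
  linear_combination (-η * η * B / (k * v)) * mul_nPDF_dOne hf hk hv

lemma hasDerivAt_neg_mul_nCDF_dTwo {f k v : ℝ} (B : ℝ) {η : ℝ} (hf : f ≠ 0) (hk : k ≠ 0)
    (hη : η ^ 2 = 1) :
    HasDerivAt (fun x => -η * B * nCDF (η * dTwo v f x)) (B / (k * v) * nPDF (dTwo v f k)) k := by
  refine ((hasDerivAt_nCDF_comp η
    (hasDerivAt_dTwo (v := v) hf hk)).const_mul (-η * B)).congr_deriv ?_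
  rw [nPDF_mul_of_sq_eq_one hη]
  linear_combination (B / (k * v) * nPDF (dTwo v f k)) * hη

theorem statement16_general (f k v B η : ℝ) (hf : 0 < f) (hk : 0 < k) (hv : 0 < v)
    (hη : η = 1 ∨ η = -1) :
    HasDerivAt (deriv (fun x : ℝ => blackFormula v B η f x))
        (B / (k * v) * nPDF (dTwo v f k)) k ∧
      HasDerivAt (fun x : ℝ => -η * B * nCDF (η * dTwo v f x))
        (B / (k * v) * nPDF (dTwo v f k)) k := by
  have hη2 : η ^ 2 = 1 := by rcases hη with rfl | rfl <;> norm_num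
  have hsecond := hasDerivAt_neg_mul_nCDF_dTwo (v := v) B hf.ne' hk.ne' hη2
  refine ⟨hsecond.congr_of_eventuallyEq ?_, hsecond⟩
  filter_upwards [eventually_gt_nhds hk] with x hx
  exact (hasDerivAt_blackFormula B hf hx hv.ne' hη2).deriv

/-- For every `k > 0`, the map `k ↦ V_B(f, k)` is twice differentiable at
`k` with second derivative `(B/(k·v))·φ(d_2(f, k))`; equivalently, the map
`k ↦ −η·B·Φ(η·d_2(f, k))` has derivative `(B/(k·v))·φ(d_2(f, k))` at `k`. -/
theorem statement16 (f k v B η : ℝ) (hf : 0 < f) (hk : 0 < k) (hv : 0 < v) (hB : 0 < B)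
    (hη : η = 1 ∨ η = -1) :
    HasDerivAt (deriv (fun x : ℝ => blackFormula v B η f x))
        (B / (k * v) * nPDF (dTwo v f k)) k ∧
      HasDerivAt (fun x : ℝ => -η * B * nCDF (η * dTwo v f x))
        (B / (k * v) * nPDF (dTwo v f k)) k :=
  statement16_general f k v B η hf hk hv hη
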